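/- Let F and L be distributions on ℝ with \bar{F}(x) ~ \bar{L}(x) as x → ∞, and suppose F*F is long-tailed. Then \overline{L*L}(x) ~ \overline{F*F}(x) as x → ∞, and hence L*L is long-tailed. -/

import Mathlib

open MeasureTheory Filter Set Asymptotics

/-- Tail function of a distribution: `F̄(x) = μ(x, ∞)`. -/
noncomputable def tail (μ : Measure ℝ) (x : ℝ) : ℝ := (μ (Set.Ioi x)).toReal

/-- `F(a, b] = F(b) - F(a)`. -/
noncomputable def intv (μ : Measure ℝ) (a b : ℝ) : ℝ := (μ (Set.Ioc a b)).toReal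

/-- A distribution is long-tailed if `F̄(x+1)/F̄(x) → 1` as `x → ∞`. -/
def LongTailed (μ : Measure ℝ) : Prop :=
  Tendsto (fun x => tail μ (x + 1) / tail μ x) atTop (nhds 1)

/-- Convolution of two distributions on ℝ (law of the sum of independent rvs). -/
noncomputable def mconv (μ ν : Measure ℝ) : Measure ℝ :=
  Measure.map (fun p : ℝ × ℝ => p.1 + p.2) (μ.prod ν)

/-- `n`-fold convolution of a distribution with itself; `nconv μ 0` is the unit mass at 0. -/
noncomputable def nconv (μ : Measure ℝ) : ℕ → Measure ℝ
  | 0 => Measure.dirac 0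
  | n + 1 => mconv (nconv μ n) μ

open Topology

/-!
Fix `c > 1`. For some shift `a`, the tails of `F` and `L` dominate each other up to the
factor `c`: `L̄(z + a) ≤ c F̄(z)` and `F̄(z + a) ≤ c L̄(z)` for every `z`. For large `z`
this comes from the tail equivalence; the remaining `z` lie far to the left once `a` is
large, where the right-hand side is close to `c > 1` and the left-hand side is at most `1`.
Since convolution is monotone under this comparison, convolving twice gives
`(L*L)‾(x + 2a) ≤ c² (F*F)‾(x)` and the symmetric bound. Long-tailedness of `F*F` makes
every fixed shift invisible in the limit, so the tail ratio of `L*L` and `F*F` tends to `1`.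
-/

lemma tail_nonneg (μ : Measure ℝ) (x : ℝ) : 0 ≤ tail μ x := ENNReal.toReal_nonneg

lemma tail_antitone (μ : Measure ℝ) [IsFiniteMeasure μ] : Antitone (tail μ) := fun _ _ h =>
  ENNReal.toReal_mono (measure_ne_top _ _) (measure_mono (Ioi_subset_Ioi h))

lemma ofReal_tail (μ : Measure ℝ) [IsFiniteMeasure μ] (x : ℝ) :
    ENNReal.ofReal (tail μ x) = μ (Ioi x) :=
  ENNReal.ofReal_toReal (measure_ne_top _ _)

instance (μ ν : Measure ℝ) [IsProbabilityMeasure μ] [IsProbabilityMeasure ν] :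
    IsProbabilityMeasure (mconv μ ν) :=
  Measure.isProbabilityMeasure_map (measurable_fst.add measurable_snd).aemeasurable

lemma mconv_comm (μ ν : Measure ℝ) [SFinite μ] [SFinite ν] : mconv μ ν = mconv ν μ := by
  unfold mconv
  rw [← Measure.prod_swap, Measure.map_map measurable_add measurable_swap]
  congr 1
  ext p
  exact add_comm _ _

lemma mconv_apply_Ioi (μ ν : Measure ℝ) [SFinite ν] (x : ℝ) :
    mconv μ ν (Ioi x) = ∫⁻ y, ν (Ioi (x - y)) ∂μ := by
  rw [mconv, Measure.map_apply measurable_add measurableSet_Ioi,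
    Measure.prod_apply (measurable_add measurableSet_Ioi)]
  refine lintegral_congr fun y => congr_arg ν (ext fun z => ?_)
  simp [sub_lt_iff_lt_add']

lemma mconv_apply_Ioi_add_le {ν ν' : Measure ℝ} [SFinite ν] [SFinite ν'] {a : ℝ}
    {c : ENNReal} (h : ∀ z, ν (Ioi (z + a)) ≤ c * ν' (Ioi z)) (μ : Measure ℝ) (x : ℝ) :
    mconv μ ν (Ioi (x + a)) ≤ c * mconv μ ν' (Ioi x) := by
  have hmeas : Measurable fun y => ν' (Ioi (x - y)) :=
    Monotone.measurable fun y y' hy => measure_mono (Ioi_subset_Ioi (by linarith))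
  rw [mconv_apply_Ioi, mconv_apply_Ioi, ← lintegral_const_mul c hmeas]
  refine lintegral_mono fun y => ?_
  simpa only [sub_add_eq_add_sub] using h (x - y)

lemma mconv_self_apply_Ioi_add_le {μ ν : Measure ℝ} [SFinite μ] [SFinite ν] {a : ℝ}
    {c : ENNReal} (h : ∀ z, μ (Ioi (z + a)) ≤ c * ν (Ioi z)) (x : ℝ) :
    mconv μ μ (Ioi (x + 2 * a)) ≤ c ^ 2 * mconv ν ν (Ioi x) :=
  calc mconv μ μ (Ioi (x + 2 * a))
      _ = mconv μ μ (Ioi (x + a + a)) := by ring_nf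
      _ ≤ c * mconv μ ν (Ioi (x + a)) := mconv_apply_Ioi_add_le h μ _
      _ = c * mconv ν μ (Ioi (x + a)) := by rw [mconv_comm]
      _ ≤ c * (c * mconv ν ν (Ioi x)) := by gcongr; exact mconv_apply_Ioi_add_le h ν x
      _ = c ^ 2 * mconv ν ν (Ioi x) := by ring

lemma tendsto_measure_Ioi_atBot (μ : Measure ℝ) :
    Tendsto (fun x => μ (Ioi x)) atBot (𝓝 (μ univ)) := by
  rw [← iUnion_Ioi]
  exact tendsto_measure_iUnion_atBot antitone_Ioi

lemma eventually_forall_measure_Ioi_add_le {μ ν : Measure ℝ} {c : ENNReal}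
    (hc : μ univ < c * ν univ) (h : ∀ᶠ z in atTop, μ (Ioi z) ≤ c * ν (Ioi z)) :
    ∀ᶠ a in atTop, ∀ z, μ (Ioi (z + a)) ≤ c * ν (Ioi z) := by
  obtain ⟨x₀, hx₀⟩ := eventually_atTop.1 h
  have hν : ν univ ≠ 0 := fun h0 => by simp [h0] at hc
  obtain ⟨t, ht⟩ := eventually_atBot.1 <|
    (ENNReal.Tendsto.const_mul (tendsto_measure_Ioi_atBot ν) (Or.inl hν)).eventually
      (lt_mem_nhds hc)
  filter_upwards [eventually_ge_atTop 0, eventually_ge_atTop (x₀ - t)] with a ha₀ ha z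
  rcases le_or_gt x₀ (z + a) with hz | hz
  · calc μ (Ioi (z + a)) ≤ c * ν (Ioi (z + a)) := hx₀ _ hz
      _ ≤ c * ν (Ioi z) := by gcongr; linarith
  · calc μ (Ioi (z + a)) ≤ μ univ := measure_mono (subset_univ _)
      _ ≤ c * ν (Ioi z) := (ht z (by linarith)).le

lemma eventually_forall_tail_mconv_self_add_le {μ ν : Measure ℝ} [IsProbabilityMeasure μ]
    [IsProbabilityMeasure ν] {b : ℝ} (hb : 1 < b)
    (h : ∀ᶠ z in atTop, tail μ z ≤ b * tail ν z) :
    ∀ᶠ a in atTop, ∀ x, tail (mconv μ μ) (x + 2 * a) ≤ b ^ 2 * tail (mconv ν ν) x := by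
  have hb₀ : 0 ≤ b := by linarith
  have hmeas : ∀ᶠ z in atTop, μ (Ioi z) ≤ ENNReal.ofReal b * ν (Ioi z) :=
    h.mono fun z hz => by
      rw [← ofReal_tail, ← ofReal_tail, ← ENNReal.ofReal_mul hb₀]
      exact ENNReal.ofReal_le_ofReal hz
  have huniv : μ univ < ENNReal.ofReal b * ν univ := by simp [hb]
  filter_upwards [eventually_forall_measure_Ioi_add_le huniv hmeas] with a ha x
  have := mconv_self_apply_Ioi_add_le ha x
  rwa [← ofReal_tail, ← ofReal_tail, ← ENNReal.ofReal_pow hb₀,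
    ← ENNReal.ofReal_mul (pow_nonneg hb₀ 2),
    ENNReal.ofReal_le_ofReal_iff (mul_nonneg (pow_nonneg hb₀ 2) (tail_nonneg _ _))] at this

lemma eventually_le_mul_and_le_mul_of_tendsto_div {f g : ℝ → ℝ} {l : Filter ℝ}
    (hg : ∀ x, 0 ≤ g x) (h : Tendsto (fun x => f x / g x) l (𝓝 1)) {c : ℝ} (hc : 1 < c) :
    ∀ᶠ x in l, f x ≤ c * g x ∧ g x ≤ c * f x := by
  have hc₀ : 0 < c := by linarith
  filter_upwards [h.eventually (gt_mem_nhds hc),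
    h.eventually (lt_mem_nhds (inv_lt_one_of_one_lt₀ hc))] with x hlt hgt
  have hgx : 0 < g x := (hg x).lt_of_ne fun h0 => by
    rw [← h0, div_zero] at hgt
    exact (inv_pos.2 hc₀).not_gt hgt
  rw [div_lt_iff₀ hgx] at hlt
  rw [lt_div_iff₀ hgx, inv_mul_lt_iff₀ hc₀] at hgt
  exact ⟨hlt.le, hgt.le⟩

lemma exists_tail_mconv_self_add_le (F L : Measure ℝ) [IsProbabilityMeasure F]
    [IsProbabilityMeasure L] (hequiv : Tendsto (fun x => tail F x / tail L x) atTop (𝓝 1))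
    {c : ℝ} (hc : 1 < c) :
    ∃ a, ∀ x, tail (mconv L L) (x + a) ≤ c * tail (mconv F F) x ∧
      tail (mconv F F) (x + a) ≤ c * tail (mconv L L) x := by
  have hb : 1 < √c := by rwa [Real.lt_sqrt zero_le_one, one_pow]
  have hsq : √c ^ 2 = c := Real.sq_sqrt (by linarith)
  have hev := eventually_le_mul_and_le_mul_of_tendsto_div (tail_nonneg L) hequiv hb
  obtain ⟨a, hLF, hFL⟩ :=
    ((eventually_forall_tail_mconv_self_add_le hb (hev.mono fun _ => And.right)).and
      (eventually_forall_tail_mconv_self_add_le hb (hev.mono fun _ => And.left))).exists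
  exact ⟨2 * a, fun x => hsq ▸ ⟨hLF x, hFL x⟩⟩

lemma tendsto_div_of_forall_add_le {f g : ℝ → ℝ} (hg : ∀ x, 0 < g x)
    (hshift : ∀ t, Tendsto (fun x => g (x + t) / g x) atTop (𝓝 1))
    (hcmp : ∀ c > 1, ∃ a, ∀ x, f (x + a) ≤ c * g x ∧ g (x + a) ≤ c * f x) :
    Tendsto (fun x => f x / g x) atTop (𝓝 1) := by
  rw [tendsto_order]
  constructor
  · intro l hl
    set l' := max l 0
    set c := 2 / (1 + l')
    have hl' : l' < 1 := max_lt hl one_pos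
    have hc : 1 < c := by rw [one_lt_div (by positivity)]; linarith
    obtain ⟨a, ha⟩ := hcmp c hc
    filter_upwards [(hshift a).eventually (lt_mem_nhds (show l' * c < 1 by
      rw [mul_div_assoc', div_lt_one (by positivity)]; linarith))] with x hx
    have hfg : c * l' < c * (f x / g x) :=
      calc c * l' = l' * c := mul_comm _ _
        _ < g (x + a) / g x := hx
        _ ≤ c * (f x / g x) := by
          rw [mul_div_assoc']; exact div_le_div_of_nonneg_right (ha x).2 (hg x).le
    exact (le_max_left l 0).trans_lt (lt_of_mul_lt_mul_left hfg (by positivity))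
  · intro u hu
    have hc : 1 < (1 + u) / 2 := by linarith
    obtain ⟨a, ha⟩ := hcmp _ hc
    filter_upwards [(hshift (-a)).eventually (gt_mem_nhds (show 1 < u / ((1 + u) / 2) by
      rw [one_lt_div (by linarith)]; linarith))] with x hx
    have hf : f x ≤ (1 + u) / 2 * g (x + -a) := by simpa using (ha (x + -a)).1
    calc f x / g x ≤ (1 + u) / 2 * (g (x + -a) / g x) := by
          rw [mul_div_assoc']; exact div_le_div_of_nonneg_right hf (hg x).le
      _ < (1 + u) / 2 * (u / ((1 + u) / 2)) := by gcongr
      _ = u := mul_div_cancel₀ _ (by linarith)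

lemma Antitone.tendsto_add_div {g : ℝ → ℝ} (hmono : Antitone g) (hpos : ∀ x, 0 < g x)
    (h1 : Tendsto (fun x => g (x + 1) / g x) atTop (𝓝 1)) (t : ℝ) :
    Tendsto (fun x => g (x + t) / g x) atTop (𝓝 1) := by
  have hnat : ∀ n : ℕ, Tendsto (fun x => g (x + n) / g x) atTop (𝓝 1) := by
    intro n
    induction n with
    | zero => simpa using tendsto_const_nhds.congr fun x => (div_self (hpos x).ne').symm
    | succ n ih =>
      have hstep := (h1.comp (tendsto_atTop_add_const_right atTop (n : ℝ) tendsto_id)).mul ih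
      rw [mul_one] at hstep
      refine hstep.congr fun x => ?_
      simp only [Function.comp_apply, Nat.cast_succ, ← add_assoc]
      exact div_mul_div_cancel₀ (hpos _).ne'
  have hneg : ∀ n : ℕ, Tendsto (fun x => g (x - n) / g x) atTop (𝓝 1) := fun n => by
    have := ((hnat n).comp (tendsto_atTop_add_const_right atTop (-n : ℝ) tendsto_id)).inv₀
      one_ne_zero
    rw [inv_one] at this
    refine this.congr fun x => ?_
    simp [sub_eq_add_neg]
  obtain ⟨n, hn⟩ := exists_nat_ge |t|
  refine tendsto_of_tendsto_of_tendsto_of_le_of_le (hnat n) (hneg n) (fun x => ?_) (fun x => ?_)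
  · exact div_le_div_of_nonneg_right (hmono (by linarith [le_abs_self t])) (hpos x).le
  · exact div_le_div_of_nonneg_right (hmono (by linarith [neg_abs_le t])) (hpos x).le

lemma LongTailed.tail_pos {μ : Measure ℝ} [IsFiniteMeasure μ] (h : LongTailed μ) (x : ℝ) :
    0 < tail μ x := by
  obtain ⟨N, hN⟩ := eventually_atTop.1 (h.eventually (lt_mem_nhds zero_lt_one))
  have hy : tail μ (max x N + 1) ≠ 0 := fun h0 => by
    simpa [h0] using hN (max x N) (le_max_right _ _)
  exact ((tail_nonneg _ _).lt_of_ne hy.symm).trans_le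
    (tail_antitone μ (by linarith [le_max_left x N]))

lemma tendsto_add_div_of_tendsto_div {f g : ℝ → ℝ} (hg : ∀ x, g x ≠ 0)
    (hfg : Tendsto (fun x => f x / g x) atTop (𝓝 1)) {t : ℝ}
    (hgt : Tendsto (fun x => g (x + t) / g x) atTop (𝓝 1)) :
    Tendsto (fun x => f (x + t) / f x) atTop (𝓝 1) := by
  have := ((hfg.comp (tendsto_atTop_add_const_right atTop t tendsto_id)).mul hgt).mul
    (hfg.inv₀ one_ne_zero)
  rw [mul_one, inv_one, mul_one] at this
  refine this.congr fun x => ?_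
  rcases eq_or_ne (f x) 0 with hf | hf
  · simp [hf]
  · simp only [Function.comp_apply, id]
    field_simp [hg x, hg (x + t)]

/-- If tail F is asymptotically equivalent to tail L and F*F is long-tailed, then the
tail of L*L is asymptotically equivalent to that of F*F, and hence L*L is long-tailed. -/
theorem stmt8 (F L : Measure ℝ) [IsProbabilityMeasure F] [IsProbabilityMeasure L]
    (hequiv : Tendsto (fun x => tail F x / tail L x) atTop (nhds 1))
    (hL : LongTailed (mconv F F)) :
    Tendsto (fun x => tail (mconv L L) x / tail (mconv F F) x) atTop (nhds 1) ∧
      LongTailed (mconv L L) := by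
  have hpos := hL.tail_pos
  have hequiv₂ := tendsto_div_of_forall_add_le hpos ((tail_antitone _).tendsto_add_div hpos hL)
    fun c hc => exists_tail_mconv_self_add_le F L hequiv hc
  exact ⟨hequiv₂, tendsto_add_div_of_tendsto_div (fun x => (hpos x).ne') hequiv₂ hL⟩
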